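/- There is no Steiner triple system of order v > 3 that simultaneously has 2-rank less than v and 3-rank less than v − 1. -/

import Mathlib

/-!
A nonzero GF(2)-vector `x` orthogonal to every block satisfies `x (third a c) = x a + x c`, so its
zero set `T` is closed under completing blocks, and for a point `s` with `x s = 1` the map
`z ↦ third s z` matches the rest of the support with `T`; hence `v = 2 |T| + 1`.

A GF(3)-vector `y` orthogonal to every block satisfies `y a + y c + y (third a c) = 0`, so
`z ↦ third s z` exchanges the fibres of `y` over the two values other than `y s`. On any closed set
on which `y` is not constant, all three fibres therefore have the same size. For the whole point
set this gives fibres of size `v / 3`; for `T` it gives `3 ∣ |T|`, impossible as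
`3 ∣ v = 2 |T| + 1`, unless `y` is constant on `T`, and then `(v - 1) / 2 = |T| ≤ v / 3` forces
`v ≤ 3`.

The rank hypotheses provide `x`, and a `y` that vanishes at a chosen point but not everywhere.
-/

/-- A Steiner triple system. -/
def IsSTS {V : Type*} [DecidableEq V] (B : Finset (Finset V)) : Prop :=
  (∀ b ∈ B, b.card = 3) ∧
  ∀ p : Finset V, p.card = 2 → ∃! b, b ∈ B ∧ p ⊆ b

/-- The characteristic vector of a block, over GF(p). -/
def charVec (p v : ℕ) (b : Finset (Fin v)) : Fin v → ZMod p :=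
  fun j => if j ∈ b then 1 else 0

open Finset Module Matrix

section Orthogonal

variable {K ι : Type*} [Field K] [Fintype ι] [DecidableEq ι]

theorem Submodule.exists_ne_zero_forall_dotProduct_eq_zero (U : Submodule K (ι → K))
    (hU : finrank K U < Fintype.card ι) : ∃ y ≠ 0, ∀ u ∈ U, y ⬝ᵥ u = 0 := by
  obtain ⟨f, hf0, hUf⟩ :=
    U.exists_le_ker_of_lt_top (Submodule.lt_top_of_finrank_lt_finrank (by simpa using hU))
  refine ⟨(dotProductEquiv K ι).symm f, by simpa using hf0, fun u hu => ?_⟩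
  rw [← dotProductEquiv_apply_apply, LinearEquiv.apply_symm_apply]
  exact hUf hu

theorem Submodule.exists_nonconstant_forall_dotProduct_eq_zero (U : Submodule K (ι → K))
    (hU : finrank K U < Fintype.card ι - 1) :
    ∃ y : ι → K, (∃ i j, y i ≠ y j) ∧ ∀ u ∈ U, y ⬝ᵥ u = 0 := by
  obtain ⟨i⟩ : Nonempty ι := Fintype.card_pos_iff.mp (by omega)
  set e : ι → K := Pi.single i 1
  have hrank : finrank K ↥(U ⊔ K ∙ e) < Fintype.card ι := by
    have := Submodule.finrank_add_le_finrank_add_finrank U (K ∙ e)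
    rw [finrank_span_singleton (by simp [e])] at this
    omega
  obtain ⟨y, hy0, hy⟩ := (U ⊔ K ∙ e).exists_ne_zero_forall_dotProduct_eq_zero hrank
  have hyi : y i = 0 := by
    simpa [e] using hy e (Submodule.mem_sup_right (Submodule.mem_span_singleton_self e))
  obtain ⟨j, hj⟩ := Function.ne_iff.mp hy0
  exact ⟨y, ⟨j, i, by rwa [hyi]⟩, fun u hu => hy u (Submodule.mem_sup_left hu)⟩

end Orthogonal

theorem dotProduct_charVec {p v : ℕ} (y : Fin v → ZMod p) (b : Finset (Fin v)) :
    y ⬝ᵥ charVec p v b = ∑ j ∈ b, y j := by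
  simp [dotProduct, charVec, sum_ite_mem]

theorem sum_eq_zero_of_forall_dotProduct_span_charVec {p v : ℕ} {B : Finset (Finset (Fin v))}
    {y : Fin v → ZMod p} (hy : ∀ u ∈ Submodule.span (ZMod p) (charVec p v '' ↑B), y ⬝ᵥ u = 0) :
    ∀ b ∈ B, ∑ j ∈ b, y j = 0 := fun b hb => by
  rw [← dotProduct_charVec]
  exact hy _ (Submodule.subset_span (Set.mem_image_of_mem _ hb))

namespace IsSTS

variable {V : Type*} [DecidableEq V] {B : Finset (Finset V)} (hB : IsSTS B)
include hB

theorem exists_third {a c : V} (hac : a ≠ c) :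
    ∃ d, d ≠ a ∧ d ≠ c ∧ {a, c, d} ∈ B ∧ ∀ b ∈ B, a ∈ b → c ∈ b → b = {a, c, d} := by
  obtain ⟨b, ⟨hbB, hacb⟩, huniq⟩ := hB.2 {a, c} (card_pair hac)
  obtain ⟨d, hd⟩ : ∃ d, b \ {a, c} = {d} := card_eq_one.mp <| by
    rw [card_sdiff_of_subset hacb, hB.1 b hbB, card_pair hac]
  have hdb : d ∈ b \ {a, c} := hd ▸ mem_singleton_self d
  simp only [mem_sdiff, mem_insert, mem_singleton, not_or] at hdb
  have hb : b = {a, c, d} := by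
    rw [← union_sdiff_of_subset hacb, hd]
    ext; simp
  refine ⟨d, hdb.2.1, hdb.2.2, hb ▸ hbB, fun b' hb' ha hc => ?_⟩
  rw [← hb]
  exact huniq b' ⟨hb', insert_subset ha (singleton_subset_iff.mpr hc)⟩

/-- For `a = c` this is the junk value `a`. -/
noncomputable def third (a c : V) : V :=
  if h : a = c then a else (hB.exists_third h).choose

variable {a c : V}

theorem third_ne_left (hac : a ≠ c) : hB.third a c ≠ a := by
  rw [third, dif_neg hac]; exact (hB.exists_third hac).choose_spec.1

theorem third_ne_right (hac : a ≠ c) : hB.third a c ≠ c := by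
  rw [third, dif_neg hac]; exact (hB.exists_third hac).choose_spec.2.1

theorem insert_third_mem (hac : a ≠ c) : {a, c, hB.third a c} ∈ B := by
  rw [third, dif_neg hac]; exact (hB.exists_third hac).choose_spec.2.2.1

theorem eq_insert_third (hac : a ≠ c) {b : Finset V} (hb : b ∈ B) (ha : a ∈ b) (hc : c ∈ b) :
    b = {a, c, hB.third a c} := by
  rw [third, dif_neg hac]; exact (hB.exists_third hac).choose_spec.2.2.2 b hb ha hc

theorem third_third (hac : a ≠ c) : hB.third a (hB.third a c) = c := by
  have hat := (hB.third_ne_left hac).symm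
  have hblock := hB.eq_insert_third hat (hB.insert_third_mem hac) (by simp) (by simp)
  have hc : c ∈ ({a, hB.third a c, hB.third a (hB.third a c)} : Finset V) := by
    rw [← hblock]; simp
  simpa [hac.symm, (hB.third_ne_right hac).symm, eq_comm] using hc

theorem apply_third {M : Type*} [AddCommGroup M] {y : V → M} (hy : ∀ b ∈ B, ∑ j ∈ b, y j = 0)
    (hac : a ≠ c) : y (hB.third a c) = -(y a + y c) := by
  have hsum := hy _ (hB.insert_third_mem hac)
  rw [sum_insert (by simp [hac, (hB.third_ne_left hac).symm]),
    sum_insert (by simp [(hB.third_ne_right hac).symm]), sum_singleton] at hsum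
  rw [eq_neg_iff_add_eq_zero, add_comm, add_assoc, hsum]

theorem card_filter_erase_eq {M : Type*} [AddCommGroup M] [DecidableEq M] {y : V → M}
    (hy : ∀ b ∈ B, ∑ j ∈ b, y j = 0) {T : Finset V}
    (hT : ∀ a ∈ T, ∀ c ∈ T, a ≠ c → hB.third a c ∈ T) {s : V} (hs : s ∈ T) (d : M) :
    #({z ∈ T | y z = d}.erase s) = #({z ∈ T | y z = -(y s + d)}.erase s) := by
  refine card_nbij' (hB.third s) (hB.third s) (fun z hz => ?_) (fun w hw => ?_)
    (fun z hz => hB.third_third (mem_erase.mp hz).1.symm)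
    (fun w hw => hB.third_third (mem_erase.mp hw).1.symm)
  · rw [mem_coe, mem_erase, mem_filter] at hz ⊢
    obtain ⟨hzs, hzT, rfl⟩ := hz
    exact ⟨hB.third_ne_left hzs.symm, hT s hs z hzT hzs.symm, hB.apply_third hy hzs.symm⟩
  · rw [mem_coe, mem_erase, mem_filter] at hw ⊢
    obtain ⟨hws, hwT, hw⟩ := hw
    refine ⟨hB.third_ne_left hws.symm, hT s hs w hwT hws.symm, ?_⟩
    rw [hB.apply_third hy hws.symm, hw]
    abel

theorem three_mul_card_filter_eq {y : V → ZMod 3} (hy : ∀ b ∈ B, ∑ j ∈ b, y j = 0)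
    {T : Finset V} (hT : ∀ a ∈ T, ∀ c ∈ T, a ≠ c → hB.third a c ∈ T) {a c : V} (ha : a ∈ T)
    (hc : c ∈ T) (hac : y a ≠ y c) (e : ZMod 3) : 3 * #{z ∈ T | y z = e} = #T := by
  have hswap : ∀ s ∈ T, ∀ d, d ≠ y s → #{z ∈ T | y z = d} = #{z ∈ T | y z = -(y s + d)} := by
    intro s hs d hd
    have hs_notMem : ∀ d, d ≠ y s → s ∉ {z ∈ T | y z = d} :=
      fun d hd h => hd (mem_filter.mp h).2.symm
    have hthird : -(y s + d) ≠ y s := by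
      revert hd; generalize y s = x; revert x d; decide
    rw [← erase_eq_of_notMem (hs_notMem d hd), ← erase_eq_of_notMem (hs_notMem _ hthird)]
    exact hB.card_filter_erase_eq hy hT hs d
  have hall : ∀ e, #{z ∈ T | y z = e} = #{z ∈ T | y z = -(y a + y c)} := by
    intro e
    obtain rfl | rfl | rfl : e = y a ∨ e = y c ∨ e = -(y a + y c) := by
      revert hac; generalize y a = α; generalize y c = β; revert α β e; decide
    · rw [hswap c hc _ hac, add_comm]
    · exact hswap a ha _ hac.symm
    · rfl
  calc 3 * #{z ∈ T | y z = e} = ∑ e : ZMod 3, #{z ∈ T | y z = e} := by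
        rw [sum_congr rfl fun e _ => hall e, hall e, sum_const, card_univ, ZMod.card, smul_eq_mul]
    _ = #T := (card_eq_sum_card_fiberwise fun _ _ => mem_univ _).symm

theorem two_mul_card_filter_eq_zero_add_one [Fintype V] {x : V → ZMod 2}
    (hx : ∀ b ∈ B, ∑ j ∈ b, x j = 0) (hx0 : x ≠ 0) :
    2 * #{j | x j = 0} + 1 = Fintype.card V := by
  obtain ⟨s, hs⟩ : ∃ s, x s = 1 := by
    obtain ⟨s, hs⟩ := Function.ne_iff.mp hx0
    exact ⟨s, (by decide : ∀ t : ZMod 2, t ≠ 0 → t = 1) _ hs⟩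
  have hs0 : s ∉ ({j | x j = 0} : Finset V) := by simp [hs]
  have hs1 : s ∈ ({j | x j = 1} : Finset V) := by simp [hs]
  have hswap :=
    hB.card_filter_erase_eq hx (T := univ) (fun _ _ _ _ _ => mem_univ _) (mem_univ s) 1
  rw [hs, (by decide : -(1 + 1 : ZMod 2) = 0), erase_eq_of_notMem hs0,
    card_erase_of_mem hs1] at hswap
  have hsplit := card_filter_add_card_filter_not (s := univ) (fun j => x j = 0)
  rw [filter_congr fun j _ => (by decide : ∀ t : ZMod 2, ¬t = 0 ↔ t = 1) (x j),
    card_univ] at hsplit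
  have := card_pos.mpr ⟨s, hs1⟩
  omega

end IsSTS

/-- There is no Steiner triple system of order `v > 3` that simultaneously has
2-rank less than `v` and 3-rank less than `v − 1`. -/
theorem no_sts_nonfull_two_and_three_rank (v : ℕ) (hv : 3 < v)
    (B : Finset (Finset (Fin v))) (hB : IsSTS B) :
    ¬ (Module.finrank (ZMod 2) (Submodule.span (ZMod 2) (charVec 2 v '' ↑B)) < v ∧
       Module.finrank (ZMod 3) (Submodule.span (ZMod 3) (charVec 3 v '' ↑B)) < v - 1) := by
  rintro ⟨h2, h3⟩
  obtain ⟨x, hx0, hx⟩ :=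
    (Submodule.span (ZMod 2) (charVec 2 v '' ↑B)).exists_ne_zero_forall_dotProduct_eq_zero
      (by simpa using h2)
  obtain ⟨y, ⟨a, c, hac⟩, hy⟩ :=
    (Submodule.span (ZMod 3) (charVec 3 v '' ↑B)).exists_nonconstant_forall_dotProduct_eq_zero
      (by simpa using h3)
  replace hx := sum_eq_zero_of_forall_dotProduct_span_charVec hx
  replace hy := sum_eq_zero_of_forall_dotProduct_span_charVec hy
  set T : Finset (Fin v) := {j | x j = 0}
  have hTcard : 2 * #T + 1 = v := by simpa using hB.two_mul_card_filter_eq_zero_add_one hx hx0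
  have hT : ∀ a ∈ T, ∀ c ∈ T, a ≠ c → hB.third a c ∈ T := fun a ha c hc hac => by
    simp_all [T, hB.apply_third hx hac]
  have hfiber : ∀ e, 3 * #{j | y j = e} = v := fun e => by
    simpa using hB.three_mul_card_filter_eq hy (fun _ _ _ _ _ => mem_univ _) (mem_univ a)
      (mem_univ c) hac e
  by_cases hconst : ∃ a ∈ T, ∃ c ∈ T, y a ≠ y c
  · obtain ⟨a, ha, c, hc, hac⟩ := hconst
    have := hB.three_mul_card_filter_eq hy hT ha hc hac 0
    have := hfiber 0
    omega
  · push Not at hconst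
    obtain ⟨t, ht⟩ : T.Nonempty := card_pos.mp (by omega)
    have : #T ≤ #{j | y j = y t} := card_le_card fun s hs => by simpa using hconst s hs t ht
    have := hfiber (y t)
    omega
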